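/- arXiv:2012.01992 — 7 statements merged into one kernel-verified Lean document; each statement's English description precedes it below -/
import Mathlib

section
/- For every natural number n ≥ 1, the number of edges of the n-Queens' graph Q(n) equals n(n−1)(5n−1)/3. -/
/-- The `n`-Queens' graph: vertices are the squares of the `n × n` chessboard
(coordinates `0 ≤ i, j ≤ n-1`, i.e. `Fin n × Fin n`); two distinct squares are
adjacent iff they share a row, a column, or a diagonal. -/
def queensGraph (n : ℕ) : SimpleGraph (Fin n × Fin n) where
  Adj u v := u ≠ v ∧ (u.1 = v.1 ∨ u.2 = v.2 ∨
    u.1.val + u.2.val = v.1.val + v.2.val ∨ u.1.val + v.2.val = v.1.val + u.2.val)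
  symm := ⟨by
    rintro u v ⟨hne, h⟩
    refine ⟨hne.symm, ?_⟩
    rcases h with h | h | h | h
    exacts [Or.inl h.symm, Or.inr (Or.inl h.symm), Or.inr (Or.inr (Or.inl h.symm)),
      Or.inr (Or.inr (Or.inr h.symm))]⟩
  loopless := ⟨fun u ⟨hne, _⟩ => hne rfl⟩

instance (n : ℕ) : DecidableRel (queensGraph n).Adj := fun u v =>
  inferInstanceAs (Decidable (u ≠ v ∧ (u.1 = v.1 ∨ u.2 = v.2 ∨
    u.1.val + u.2.val = v.1.val + v.2.val ∨ u.1.val + v.2.val = v.1.val + u.2.val)))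

/-! Two distinct lines of the board (rows, columns and the two diagonal directions) meet in at
most one square, so the neighbours of a square are partitioned by the four lines through it and
its degree is the total length of those lines minus 4. Summing over squares, `2|E| + 4n²` is the
sum of the squared lengths of all lines: `n³` for the rows, `n³` for the columns, and for each
diagonal direction `∑ₛ L(s)² = n(2n² + 1)/3`, where `L(s) = min(s + 1, 2n - 1 - s)` is the length
of the diagonal `i + j = s`. -/

open Finset

section Lines

variable {V ι α : Type*} [Fintype V] [Fintype ι] [DecidableEq α]

lemma SimpleGraph.degree_add_card_eq_sum_card_fiber [DecidableEq V] (G : SimpleGraph V)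
    [DecidableRel G.Adj] (f : ι → V → α)
    (hadj : ∀ u v, G.Adj u v ↔ u ≠ v ∧ ∃ i, f i u = f i v)
    (hmeet : ∀ u v i j, i ≠ j → f i u = f i v → f j u = f j v → u = v) (u : V) :
    G.degree u + Fintype.card ι = ∑ i, #{v | f i v = f i u} := by
  have hnbr : G.neighborFinset u =
      univ.biUnion fun i => ({v | f i v = f i u} : Finset V).erase u := by
    ext v
    simp [hadj, eq_comm, and_comm]
  have hdisj : ((univ : Finset ι) : Set ι).PairwiseDisjoint
      fun i => ({v | f i v = f i u} : Finset V).erase u := by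
    intro i _ j _ hij
    rw [Function.onFun, Finset.disjoint_left]
    intro v hvi hvj
    simp only [mem_erase, mem_filter, mem_univ, true_and] at hvi hvj
    exact hvi.1 (hmeet v u i j hij hvi.2 hvj.2)
  rw [← card_neighborFinset_eq_degree, hnbr, card_biUnion hdisj, ← card_univ, card_eq_sum_ones,
    ← sum_add_distrib]
  exact sum_congr rfl fun i _ => card_erase_add_one (by simp)

lemma SimpleGraph.two_mul_card_edgeFinset_add_eq_sum_card_fiber [DecidableEq V] (G : SimpleGraph V)
    [DecidableRel G.Adj] (f : ι → V → α)
    (hadj : ∀ u v, G.Adj u v ↔ u ≠ v ∧ ∃ i, f i u = f i v)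
    (hmeet : ∀ u v i j, i ≠ j → f i u = f i v → f j u = f j v → u = v) :
    2 * #G.edgeFinset + Fintype.card V * Fintype.card ι = ∑ i, ∑ u, #{v | f i v = f i u} := by
  rw [← G.sum_degrees_eq_twice_card_edges, ← card_univ, ← smul_eq_mul, ← sum_const,
    ← sum_add_distrib, sum_comm]
  exact sum_congr rfl fun u _ => G.degree_add_card_eq_sum_card_fiber f hadj hmeet u

lemma sum_card_fiber_eq_sum_sq (f : V → α) {t : Finset α} (h : ∀ v, f v ∈ t) :
    ∑ u, #{v | f v = f u} = ∑ a ∈ t, #{v | f v = a} ^ 2 := by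
  rw [← sum_fiberwise_of_maps_to (fun v _ => h v)]
  refine sum_congr rfl fun a _ => ?_
  rw [sq, ← smul_eq_mul, ← sum_const]
  exact sum_congr rfl fun u hu => by rw [(mem_filter.mp hu).2]

lemma sum_card_fiber_comp_equiv {W : Type*} [Fintype W] (f : W → α) (e : V ≃ W) :
    ∑ u, #{v | f (e v) = f (e u)} = ∑ w, #{v | f v = f w} :=
  Fintype.sum_equiv e _ _ fun u => card_equiv e (by simp)

end Lines

namespace Queens

lemma card_row_through (n : ℕ) (u : Fin n × Fin n) :
    #{v : Fin n × Fin n | (v.1 : ℕ) = u.1} = n := by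
  simp only [Fin.val_inj]
  rw [← univ_product_univ, filter_product_left (· = u.1)]
  simp [filter_eq']

lemma card_column_through (n : ℕ) (u : Fin n × Fin n) :
    #{v : Fin n × Fin n | (v.2 : ℕ) = u.2} = n := by
  simp only [Fin.val_inj]
  rw [← univ_product_univ, filter_product_right (· = u.2)]
  simp [filter_eq']

def diagLength (n s : ℕ) : ℕ := min (s + 1) n - (s + 1 - n)

lemma card_diag (n s : ℕ) : #{v : Fin n × Fin n | (v.1 : ℕ) + v.2 = s} = diagLength n s := by
  rw [diagLength, ← Nat.card_Ico]
  refine card_bij (fun v _ => v.1.val) ?_ ?_ ?_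
  · intro v hv
    simp only [mem_filter, mem_univ, true_and] at hv
    simp only [mem_Ico]
    omega
  · intro v hv w hw h
    simp only [mem_filter, mem_univ, true_and] at hv hw
    exact Prod.ext (Fin.ext h) (Fin.ext (by omega))
  · intro a ha
    simp only [mem_Ico] at ha
    refine ⟨(⟨a, by omega⟩, ⟨s - a, by omega⟩), ?_, rfl⟩
    simp only [mem_filter, mem_univ, true_and]
    omega

lemma six_mul_sum_range_succ_sq (k : ℕ) :
    6 * ∑ t ∈ range k, (t + 1) ^ 2 = k * (k + 1) * (2 * k + 1) := by
  induction k with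
  | zero => simp
  | succ k ih => rw [sum_range_succ, mul_add, ih]; ring

lemma three_mul_sum_sq_diagLength (n : ℕ) :
    3 * ∑ s ∈ range (2 * n - 1), diagLength n s ^ 2 = n * (2 * n ^ 2 + 1) := by
  rcases n with _ | m
  · simp
  have hrange : 2 * (m + 1) - 1 = (m + 1) + m := by omega
  have hlow : ∀ s ∈ range (m + 1), diagLength (m + 1) s ^ 2 = (s + 1) ^ 2 := by
    intro s hs
    rw [mem_range] at hs
    rw [diagLength]; congr 1; omega
  have hhigh : ∀ t ∈ range m, diagLength (m + 1) (m + 1 + t) ^ 2 = (m - 1 - t + 1) ^ 2 := by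
    intro t ht
    rw [mem_range] at ht
    rw [diagLength]; congr 1; omega
  have h1 := six_mul_sum_range_succ_sq (m + 1)
  have h2 := six_mul_sum_range_succ_sq m
  rw [hrange, sum_range_add, sum_congr rfl hlow, sum_congr rfl hhigh,
    sum_range_reflect (fun t => (t + 1) ^ 2) m]
  linarith

/-- The four lines through a square: row, column, and the diagonals `i + j = const` and
`i - j = const`, the latter read as `i + (n - 1 - j)` to stay in `ℕ`. -/
def line (n : ℕ) : Fin 4 → Fin n × Fin n → ℕ :=
  ![fun v => v.1, fun v => v.2, fun v => v.1 + v.2, fun v => v.1 + (Fin.rev v.2 : ℕ)]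

lemma adj_iff_exists_line_eq (n : ℕ) (u v : Fin n × Fin n) :
    (queensGraph n).Adj u v ↔ u ≠ v ∧ ∃ i, line n i u = line n i v := by
  simp [queensGraph, line, Fin.exists_fin_succ, Fin.ext_iff]
  omega

lemma eq_of_line_eq_of_line_eq (n : ℕ) (u v : Fin n × Fin n) (i j : Fin 4) (hij : i ≠ j)
    (hi : line n i u = line n i v) (hj : line n j u = line n j v) : u = v := by
  fin_cases i <;> fin_cases j <;> simp_all [line, Prod.ext_iff, Fin.ext_iff] <;> omega

lemma three_mul_sum_card_line (n : ℕ) :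
    3 * ∑ i, ∑ u, #{v | line n i v = line n i u} = 2 * n * (5 * n ^ 2 + 1) := by
  have hrow : ∑ u, #{v | line n 0 v = line n 0 u} = n ^ 3 := by
    refine (sum_congr rfl fun u _ => card_row_through n u).trans ?_
    simp [pow_succ]
  have hcol : ∑ u, #{v | line n 1 v = line n 1 u} = n ^ 3 := by
    refine (sum_congr rfl fun u _ => card_column_through n u).trans ?_
    simp [pow_succ]
  have hdiag : ∑ u, #{v | line n 2 v = line n 2 u} =
      ∑ s ∈ range (2 * n - 1), diagLength n s ^ 2 := by
    rw [sum_card_fiber_eq_sum_sq (line n 2) (t := range (2 * n - 1))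
      fun v => by simp only [line, Matrix.cons_val, mem_range]; omega]
    exact sum_congr rfl fun s _ => congrArg (· ^ 2) (card_diag n s)
  have hanti : ∑ u, #{v | line n 3 v = line n 3 u} = ∑ u, #{v | line n 2 v = line n 2 u} :=
    sum_card_fiber_comp_equiv (line n 2) ((Equiv.refl _).prodCongr Fin.revPerm)
  rw [Fin.sum_univ_four, hrow, hcol, hanti, hdiag]
  linarith [three_mul_sum_sq_diagLength n]

end Queens

theorem queens_edge_count_general (n : ℕ) :
    (queensGraph n).edgeFinset.card = n * (n - 1) * (5 * n - 1) / 3 := by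
  have hcount := (queensGraph n).two_mul_card_edgeFinset_add_eq_sum_card_fiber (Queens.line n)
    (Queens.adj_iff_exists_line_eq n) (Queens.eq_of_line_eq_of_line_eq n)
  simp only [Fintype.card_prod, Fintype.card_fin] at hcount
  have hedges : 3 * #(queensGraph n).edgeFinset + 6 * n ^ 2 = 5 * n ^ 3 + n := by
    linarith [Queens.three_mul_sum_card_line n]
  have h3 : n * (n - 1) * (5 * n - 1) = 3 * #(queensGraph n).edgeFinset := by
    rcases n with _ | m
    · simpa using hedges.symm
    · rw [Nat.add_sub_cancel, show 5 * (m + 1) - 1 = 5 * m + 4 by omega]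
      linarith
  rw [h3, Nat.mul_div_cancel_left _ (by norm_num)]

/-- the number of edges of `Q(n)` equals `n(n-1)(5n-1)/3`. -/
theorem queens_edge_count (n : ℕ) (hn : 1 ≤ n) :
    (queensGraph n).edgeFinset.card = n * (n - 1) * (5 * n - 1) / 3 :=
  queens_edge_count_general n
end

section
/- Let n ≥ 2. For every vertex v of the n-Queens' graph Q(n), the degree d_v of v satisfies 3(n−1) ≤ d_v, and d_v ≤ 4n−5 if n is even, while d_v ≤ 4n−4 if n is odd. -/
/-!
The neighbours of `v = (i, j)` are the other squares on its row, its column and its two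
diagonals, and two distinct lines through `v` meet only at `v`. The diagonals have lengths
`min (i + j) (2(n-1) - (i + j)) + 1` and `n - |i - j|`, so
`deg v = 2(n-1) + min (i + j) (2(n-1) - (i + j)) + (n - 1 - |i - j|)`.
Both `i + j` and `2(n-1) - (i + j)` are at least `|i - j|`, giving `deg v ≥ 3(n-1)`; both
diagonals have length at most `n`, and both reach it only at a central square `i = j = (n-1)/2`,
which exists only for odd `n`.
-/

open Finset

namespace queensGraph

variable {n : ℕ}

def row (v : Fin n × Fin n) : Finset (Fin n × Fin n) := {v.1} ×ˢ univ

def col (v : Fin n × Fin n) : Finset (Fin n × Fin n) := univ ×ˢ {v.2}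

def sumDiag (v : Fin n × Fin n) : Finset (Fin n × Fin n) :=
  {u | u.1.val + u.2.val = v.1.val + v.2.val}

def diffDiag (v : Fin n × Fin n) : Finset (Fin n × Fin n) :=
  {u | u.1.val + v.2.val = v.1.val + u.2.val}

theorem card_row (v : Fin n × Fin n) : #(row v) = n := by simp [row]

theorem card_col (v : Fin n × Fin n) : #(col v) = n := by simp [col]

theorem card_sumDiag (v : Fin n × Fin n) :
    #(sumDiag v) = min (v.1.val + v.2.val) (2 * (n - 1) - (v.1.val + v.2.val)) + 1 := by
  have hi := v.1.isLt
  have hj := v.2.isLt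
  have hcard : #(sumDiag v) =
      #(Icc (v.1.val + v.2.val - (n - 1)) (min (v.1.val + v.2.val) (n - 1))) := by
    refine card_nbij (fun u => u.1.val) ?_ ?_ ?_
    · intro u hu
      simp only [sumDiag, mem_univ, true_and, coe_filter, Set.mem_ofPred_eq, coe_Icc,
        Set.mem_Icc] at hu ⊢
      omega
    · intro u hu u' hu' h
      simp only [sumDiag, coe_filter, mem_univ, true_and, Set.mem_ofPred_eq] at hu hu'
      simp only [Prod.ext_iff, Fin.ext_iff] at h ⊢
      omega
    · intro a ha
      simp only [coe_Icc, Set.mem_Icc] at ha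
      refine ⟨(⟨a, by omega⟩, ⟨v.1.val + v.2.val - a, by omega⟩), ?_, rfl⟩
      simp only [sumDiag, coe_filter, mem_univ, true_and, Set.mem_ofPred_eq]
      omega
  rw [hcard, Nat.card_Icc]
  omega

theorem card_diffDiag (v : Fin n × Fin n) :
    #(diffDiag v) = n - (max v.1.val v.2.val - min v.1.val v.2.val) := by
  have hi := v.1.isLt
  have hj := v.2.isLt
  have hcard : #(diffDiag v) =
      #(Icc (v.1.val - v.2.val) (n - 1 - (v.2.val - v.1.val))) := by
    refine card_nbij (fun u => u.1.val) ?_ ?_ ?_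
    · intro u hu
      simp only [diffDiag, mem_univ, true_and, coe_filter, Set.mem_ofPred_eq, coe_Icc,
        Set.mem_Icc] at hu ⊢
      omega
    · intro u hu u' hu' h
      simp only [diffDiag, coe_filter, mem_univ, true_and, Set.mem_ofPred_eq] at hu hu'
      simp only [Prod.ext_iff, Fin.ext_iff] at h ⊢
      omega
    · intro a ha
      simp only [coe_Icc, Set.mem_Icc] at ha
      refine ⟨(⟨a, by omega⟩, ⟨a + v.2.val - v.1.val, by omega⟩), ?_, rfl⟩
      simp only [diffDiag, coe_filter, mem_univ, true_and, Set.mem_ofPred_eq]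
      omega
  rw [hcard, Nat.card_Icc]
  omega

theorem neighborFinset_eq (v : Fin n × Fin n) :
    (queensGraph n).neighborFinset v =
      (row v).erase v ∪ (col v).erase v ∪ (sumDiag v).erase v ∪ (diffDiag v).erase v := by
  ext u
  rw [SimpleGraph.mem_neighborFinset]
  simp only [queensGraph, row, col, sumDiag, diffDiag, mem_union, mem_erase, mem_product,
    mem_singleton, mem_univ, mem_filter, true_and, and_true, ne_eq, Prod.ext_iff, Fin.ext_iff]
  omega

theorem disjoint_erase_lines (v : Fin n × Fin n) :
    Disjoint ((row v).erase v ∪ (col v).erase v ∪ (sumDiag v).erase v) ((diffDiag v).erase v) ∧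
      Disjoint ((row v).erase v ∪ (col v).erase v) ((sumDiag v).erase v) ∧
      Disjoint ((row v).erase v) ((col v).erase v) := by
  simp only [disjoint_left, row, col, sumDiag, diffDiag, mem_union, mem_erase, mem_product,
    mem_singleton, mem_univ, mem_filter, true_and, and_true, ne_eq, Prod.ext_iff, Fin.ext_iff]
  exact ⟨fun u => by omega, fun u => by omega, fun u => by omega⟩

theorem degree_eq (v : Fin n × Fin n) :
    (queensGraph n).degree v =
      2 * (n - 1) + min (v.1.val + v.2.val) (2 * (n - 1) - (v.1.val + v.2.val)) +
        (n - 1 - (max v.1.val v.2.val - min v.1.val v.2.val)) := by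
  obtain ⟨hdiff, hsum, hcol⟩ := disjoint_erase_lines v
  have hv : v ∈ row v ∧ v ∈ col v ∧ v ∈ sumDiag v ∧ v ∈ diffDiag v := by
    simp [row, col, sumDiag, diffDiag]
  rw [← SimpleGraph.card_neighborFinset_eq_degree, neighborFinset_eq, card_union_of_disjoint hdiff,
    card_union_of_disjoint hsum, card_union_of_disjoint hcol, card_erase_of_mem hv.1,
    card_erase_of_mem hv.2.1, card_erase_of_mem hv.2.2.1, card_erase_of_mem hv.2.2.2, card_row,
    card_col, card_sumDiag, card_diffDiag]
  have := v.1.isLt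
  omega

end queensGraph

theorem queens_degree_bounds_general (n : ℕ) (v : Fin n × Fin n) :
    3 * (n - 1) ≤ (queensGraph n).degree v ∧
      (Even n → (queensGraph n).degree v ≤ 4 * n - 5) ∧
      (Odd n → (queensGraph n).degree v ≤ 4 * n - 4) := by
  have hi := v.1.isLt
  have hj := v.2.isLt
  rw [queensGraph.degree_eq]
  refine ⟨by omega, fun ⟨k, hk⟩ => by omega, fun ⟨k, hk⟩ => by omega⟩

/-- degree bounds for the vertices of `Q(n)`, `n ≥ 2`. -/
theorem queens_degree_bounds (n : ℕ) (hn : 2 ≤ n) (v : Fin n × Fin n) :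
    3 * (n - 1) ≤ (queensGraph n).degree v ∧
      (Even n → (queensGraph n).degree v ≤ 4 * n - 5) ∧
      (Odd n → (queensGraph n).degree v ≤ 4 * n - 4) :=
  queens_degree_bounds_general n v
end

section
/- The clique number of the n-Queens' graph satisfies: ω(Q(2)) = 4, ω(Q(3)) = 5, ω(Q(4)) = 5, and ω(Q(n)) = n for every n ≥ 5. -/
/-!
Map the board into `ℤ × ℤ`, where rows, columns and both diagonals are the level sets of four
linear forms, and a linear injection carries any one family to the rows while permuting the four
families. Let `S` be a clique with at least six squares and `p ∈ S`. By pigeonhole two further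
squares `q, r` share a line `L` with `p`. If some square `w ∈ S` lies off `L`, then `w` attacks at
most three squares of `L`, so `|S ∩ L| ≤ 3`; and every square of `S` off `L` must meet `L` in
exactly `{p, q, r}` along its three non-parallel lines, which leaves only a square and its mirror
image in `L`. Hence `|S| ≤ 5`, a contradiction, so `S` lies on a line and `|S| ≤ n`. Rows give
cliques of size `n`, all four squares of the `2 × 2` board form a clique, and the corners and
centre of a `3 × 3` board give one of size `5`.
-/

open Finset SimpleGraph

namespace QueensGraph

def lineCoord : Fin 4 → ℤ × ℤ → ℤ
  | 0, u => u.1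
  | 1, u => u.2
  | 2, u => u.1 + u.2
  | 3, u => u.1 - u.2

def Attacks (u v : ℤ × ℤ) : Prop := ∃ k, lineCoord k u = lineCoord k v

lemma attacks_iff {u v : ℤ × ℤ} : Attacks u v ↔
    u.1 = v.1 ∨ u.2 = v.2 ∨ u.1 + u.2 = v.1 + v.2 ∨ u.1 - u.2 = v.1 - v.2 := by
  simp [Attacks, Fin.exists_fin_succ, lineCoord]

lemma Attacks.refl (u : ℤ × ℤ) : Attacks u u := ⟨0, rfl⟩

def toRow : Fin 4 → ℤ × ℤ → ℤ × ℤ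
  | 0, u => u
  | 1, u => (u.2, u.1)
  | 2, u => (u.1 + u.2, u.1 - u.2)
  | 3, u => (u.1 - u.2, u.1 + u.2)

lemma toRow_fst (k : Fin 4) (u : ℤ × ℤ) : (toRow k u).1 = lineCoord k u := by
  fin_cases k <;> rfl

lemma toRow_injective (k : Fin 4) : Function.Injective (toRow k) := by
  intro u v h
  fin_cases k <;> simp only [toRow, Prod.ext_iff] at h ⊢ <;> omega

lemma Attacks.toRow {u v : ℤ × ℤ} (h : Attacks u v) (k : Fin 4) :
    Attacks (toRow k u) (toRow k v) := by
  rw [attacks_iff] at h ⊢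
  fin_cases k <;> simp only [QueensGraph.toRow] <;> omega

lemma sq_sum_eq_of_mem_three {a b c m d : ℤ} (hab : a ≠ b) (hac : a ≠ c) (hbc : b ≠ c)
    (ha : a = m ∨ a = m + d ∨ a = m - d) (hb : b = m ∨ b = m + d ∨ b = m - d)
    (hc : c = m ∨ c = m + d ∨ c = m - d) :
    3 * m = a + b + c ∧ (a - m) ^ 2 + (b - m) ^ 2 + (c - m) ^ 2 = 2 * d ^ 2 := by
  rcases ha with rfl | rfl | rfl <;> rcases hb with rfl | rfl | rfl <;>
    rcases hc with rfl | rfl | rfl <;> first | omega | constructor <;> ring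

section Row

variable {R : ℤ}

lemma card_le_three_of_forall_attacks_on_row {T : Finset (ℤ × ℤ)} {w : ℤ × ℤ}
    (hw : w.1 ≠ R)
    (hT : ∀ x ∈ T, x.1 = R ∧ Attacks w x) : #T ≤ 3 := by
  calc #T ≤ #({(R, w.2), (R, w.1 + w.2 - R), (R, w.2 - w.1 + R)} : Finset (ℤ × ℤ)) := by
        refine card_le_card fun x hx => ?_
        obtain ⟨hxR, hwx⟩ := hT x hx
        rw [attacks_iff] at hwx
        simp only [mem_insert, mem_singleton, Prod.ext_iff]
        omega
    _ ≤ 3 := card_le_three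

lemma eq_or_eq_reflect_of_attacks_three_on_row {a b c : ℤ} (hab : a ≠ b) (hac : a ≠ c)
    (hbc : b ≠ c) {x y : ℤ × ℤ} (hx : x.1 ≠ R) (hy : y.1 ≠ R)
    (hxa : Attacks x (R, a)) (hxb : Attacks x (R, b)) (hxc : Attacks x (R, c))
    (hya : Attacks y (R, a)) (hyb : Attacks y (R, b)) (hyc : Attacks y (R, c)) :
    y = x ∨ y = (2 * R - x.1, x.2) := by
  -- The column and the two diagonals of such a `z` meet row `R` exactly in `a, b, c`, so the
  -- column of `z` is their mean and `|z.1 - R|` is determined by their spread.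
  have key : ∀ z : ℤ × ℤ, z.1 ≠ R → Attacks z (R, a) → Attacks z (R, b) →
      Attacks z (R, c) → 3 * z.2 = a + b + c ∧
        (a - z.2) ^ 2 + (b - z.2) ^ 2 + (c - z.2) ^ 2 = 2 * (z.1 - R) ^ 2 := by
    intro z hz hza hzb hzc
    simp only [attacks_iff] at hza hzb hzc
    exact sq_sum_eq_of_mem_three hab hac hbc (by omega) (by omega) (by omega)
  obtain ⟨hx3, hx2⟩ := key x hx hxa hxb hxc
  obtain ⟨hy3, hy2⟩ := key y hy hya hyb hyc
  have h2 : y.2 = x.2 := by omega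
  rw [h2] at hy2
  have hsq : (y.1 - R) ^ 2 = (x.1 - R) ^ 2 := by linarith
  rcases sq_eq_sq_iff_eq_or_eq_neg.mp hsq with h | h
  · left; ext <;> omega
  · right; ext <;> dsimp only <;> omega

lemma card_le_two_of_forall_attacks_three_on_row {a b c : ℤ} (hab : a ≠ b) (hac : a ≠ c)
    (hbc : b ≠ c) {T : Finset (ℤ × ℤ)}
    (hT : ∀ x ∈ T, x.1 ≠ R ∧ Attacks x (R, a) ∧ Attacks x (R, b) ∧ Attacks x (R, c)) :
    #T ≤ 2 := by
  rcases T.eq_empty_or_nonempty with rfl | ⟨x, hx⟩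
  · simp
  obtain ⟨hxR, hxa, hxb, hxc⟩ := hT x hx
  calc #T ≤ #({x, (2 * R - x.1, x.2)} : Finset (ℤ × ℤ)) := by
        refine card_le_card fun y hy => ?_
        obtain ⟨hyR, hya, hyb, hyc⟩ := hT y hy
        simpa using eq_or_eq_reflect_of_attacks_three_on_row hab hac hbc hxR hyR
          hxa hxb hxc hya hyb hyc
    _ ≤ 2 := card_le_two

lemma card_le_five_of_three_on_row {S : Finset (ℤ × ℤ)}
    (hS : ∀ u ∈ S, ∀ v ∈ S, Attacks u v)
    {a b c : ℤ} (hab : a ≠ b) (hac : a ≠ c) (hbc : b ≠ c)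
    (ha : (R, a) ∈ S) (hb : (R, b) ∈ S) (hc : (R, c) ∈ S)
    {w : ℤ × ℤ} (hw : w ∈ S) (hwR : w.1 ≠ R) : #S ≤ 5 := by
  have hon : #(S.filter (·.1 = R)) ≤ 3 :=
    card_le_three_of_forall_attacks_on_row hwR fun x hx =>
      ⟨(mem_filter.1 hx).2, hS w hw x (mem_filter.1 hx).1⟩
  have hoff : #(S.filter (¬ ·.1 = R)) ≤ 2 :=
    card_le_two_of_forall_attacks_three_on_row hab hac hbc fun x hx =>
      have hxS := (mem_filter.1 hx).1
      ⟨(mem_filter.1 hx).2, hS x hxS _ ha, hS x hxS _ hb, hS x hxS _ hc⟩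
  rw [← card_filter_add_card_filter_not (·.1 = R)]
  omega

end Row

lemma card_le_five_of_three_on_line {S : Finset (ℤ × ℤ)}
    (hS : ∀ u ∈ S, ∀ v ∈ S, Attacks u v)
    (k : Fin 4) {p q r w : ℤ × ℤ} (hp : p ∈ S) (hq : q ∈ S) (hr : r ∈ S) (hw : w ∈ S)
    (hpq : p ≠ q) (hpr : p ≠ r) (hqr : q ≠ r)
    (hqp : lineCoord k q = lineCoord k p) (hrp : lineCoord k r = lineCoord k p)
    (hwp : lineCoord k w ≠ lineCoord k p) : #S ≤ 5 := by
  have hinj := toRow_injective k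
  have mem_row : ∀ x ∈ S, lineCoord k x = lineCoord k p →
      (lineCoord k p, (toRow k x).2) ∈ S.image (toRow k) := fun x hx hxp => by
    rw [← hxp, ← toRow_fst]
    exact mem_image_of_mem _ hx
  have snd_ne : ∀ x y, x ≠ y → lineCoord k x = lineCoord k y →
      (toRow k x).2 ≠ (toRow k y).2 :=
    fun x y hxy hk h => hxy (hinj (Prod.ext (by rwa [toRow_fst, toRow_fst]) h))
  rw [← card_image_of_injective S hinj]
  refine card_le_five_of_three_on_row ?_ (snd_ne p q hpq hqp.symm) (snd_ne p r hpr hrp.symm)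
    (snd_ne q r hqr (hqp.trans hrp.symm)) (mem_row p hp rfl) (mem_row q hq hqp)
    (mem_row r hr hrp) (mem_image_of_mem _ hw) (by rwa [toRow_fst])
  simp only [mem_image]
  rintro _ ⟨u, hu, rfl⟩ _ ⟨v, hv, rfl⟩
  exact (hS u hu v hv).toRow k

lemma card_le_five_or_forall_lineCoord_eq {S : Finset (ℤ × ℤ)}
    (hS : ∀ u ∈ S, ∀ v ∈ S, Attacks u v) :
    #S ≤ 5 ∨ ∃ k c, ∀ u ∈ S, lineCoord k u = c := by
  by_contra! ⟨hcard, hline⟩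
  obtain ⟨p, hp⟩ := card_pos.mp (by omega : 0 < #S)
  choose! dir hdir using fun x (hx : x ∈ S.erase p) => hS x (mem_of_mem_erase hx) p hp
  -- pigeonhole: five other points, four lines through `p`
  obtain ⟨q, hq, r, hr, hqr, hdir_eq⟩ := exists_ne_map_eq_of_card_lt_of_maps_to
    (t := univ) (by rw [card_erase_of_mem hp]; simp; omega) fun x _ => mem_univ (dir x)
  obtain ⟨w, hw, hwp⟩ := hline (dir q) (lineCoord (dir q) p)
  refine (card_le_five_of_three_on_line hS (dir q) hp (mem_of_mem_erase hq)
    (mem_of_mem_erase hr) hw (ne_of_mem_erase hq).symm (ne_of_mem_erase hr).symm hqr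
    (hdir q hq) ?_ hwp).not_gt hcard
  rw [hdir_eq]
  exact hdir r hr

def toInt {n : ℕ} (u : Fin n × Fin n) : ℤ × ℤ := (u.1, u.2)

lemma toInt_injective {n : ℕ} : Function.Injective (toInt (n := n)) := by
  intro u v h
  simp only [toInt, Prod.ext_iff, Nat.cast_inj, Fin.val_inj] at h
  exact Prod.ext h.1 h.2

lemma attacks_toInt_of_adj {n : ℕ} {u v : Fin n × Fin n} (h : (queensGraph n).Adj u v) :
    Attacks (toInt u) (toInt v) := by
  obtain ⟨-, h⟩ := h
  simp only [attacks_iff, toInt, ← Fin.val_inj] at h ⊢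
  omega

lemma card_le_of_forall_lineCoord_eq {n : ℕ} {s : Finset (Fin n × Fin n)} {k : Fin 4} {c : ℤ}
    (hs : ∀ u ∈ s, lineCoord k (toInt u) = c) : #s ≤ n := by
  have hinj : Set.InjOn Prod.fst (s : Set (Fin n × Fin n)) ∨
      Set.InjOn Prod.snd (s : Set (Fin n × Fin n)) := by
    have hkey := fun u hu v hv => (hs u hu).trans (hs v hv).symm
    fin_cases k
    · right
      intro u hu v hv huv
      have := hkey u hu v hv
      simp only [lineCoord, toInt, Nat.cast_inj, Fin.val_inj] at this
      exact Prod.ext this huv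
    all_goals
      left
      intro u hu v hv huv
      have := hkey u hu v hv
      simp only [lineCoord, toInt, ← Fin.val_inj] at this huv ⊢
      exact Prod.ext (Fin.ext huv) (Fin.ext (by omega))
  rcases hinj with h | h
  · simpa using card_le_card_of_injOn (t := univ) Prod.fst (fun _ _ => mem_univ _) h
  · simpa using card_le_card_of_injOn (t := univ) Prod.snd (fun _ _ => mem_univ _) h

end QueensGraph

open QueensGraph

lemma SimpleGraph.IsClique.card_le_max_five {n : ℕ} {s : Finset (Fin n × Fin n)}
    (hs : (queensGraph n).IsClique s) : #s ≤ max n 5 := by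
  have hS : ∀ x ∈ s.image toInt, ∀ y ∈ s.image toInt, Attacks x y := by
    simp only [mem_image]
    rintro _ ⟨u, hu, rfl⟩ _ ⟨v, hv, rfl⟩
    obtain rfl | huv := eq_or_ne u v
    · exact Attacks.refl _
    · exact attacks_toInt_of_adj (hs hu hv huv)
  rcases card_le_five_or_forall_lineCoord_eq hS with h5 | ⟨k, c, hc⟩
  · rw [card_image_of_injective s toInt_injective] at h5
    exact le_max_of_le_right h5
  · exact le_max_of_le_left <|
      card_le_of_forall_lineCoord_eq fun u hu => hc _ (mem_image_of_mem _ hu)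

lemma cliqueNum_queensGraph_le (n : ℕ) : (queensGraph n).cliqueNum ≤ max n 5 := by
  obtain ⟨s, hs⟩ := (queensGraph n).exists_isNClique_cliqueNum
  rw [← hs.card_eq]
  exact hs.isClique.card_le_max_five

lemma isClique_queensGraph_row {n : ℕ} (i : Fin n) :
    (queensGraph n).IsClique (univ.image fun j : Fin n => (i, j) : Finset (Fin n × Fin n)) := by
  simp only [coe_image, coe_univ, Set.image_univ]
  rintro _ ⟨j, rfl⟩ _ ⟨j', rfl⟩ hne
  exact ⟨hne, Or.inl rfl⟩

/-- `ω(Q(2)) = 4`, `ω(Q(3)) = ω(Q(4)) = 5` and `ω(Q(n)) = n` for `n ≥ 5`. -/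
theorem queens_cliqueNum :
    (queensGraph 2).cliqueNum = 4 ∧ (queensGraph 3).cliqueNum = 5 ∧
      (queensGraph 4).cliqueNum = 5 ∧
      ∀ n : ℕ, 5 ≤ n → (queensGraph n).cliqueNum = n := by
  refine ⟨?_, ?_, ?_, fun n hn => ?_⟩
  · rw [← maximumClique_card_eq_cliqueNum univ ⟨by decide, fun s _ => card_le_univ s⟩]
    rfl
  · refine le_antisymm (cliqueNum_queensGraph_le 3) ?_
    exact IsClique.card_le_cliqueNum (G := queensGraph 3)
      (t := {(0, 0), (0, 2), (1, 1), (2, 0), (2, 2)}) (tc := by decide)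
  · refine le_antisymm (cliqueNum_queensGraph_le 4) ?_
    exact IsClique.card_le_cliqueNum (G := queensGraph 4)
      (t := {(0, 0), (0, 2), (1, 1), (2, 0), (2, 2)}) (tc := by decide)
  · refine le_antisymm ((cliqueNum_queensGraph_le n).trans (max_eq_left hn).le) ?_
    have hrow := (isClique_queensGraph_row (⟨0, by omega⟩ : Fin n)).card_le_cliqueNum
    rwa [card_image_of_injective _ (Prod.mk_right_injective _), card_univ,
      Fintype.card_fin] at hrow
end

section
/- For every n ≥ 5: χ(Q(n)) = n when n ≡ 1 or 5 (mod 6); χ(Q(n)) ∈ {n, n+1} when n ≡ 0 or 4 (mod 6); χ(Q(n)) ∈ {n, n+1, n+2, n+3} when n ≡ 2 (mod 6); and χ(Q(n)) ∈ {n, n+1, n+2} when n ≡ 3 (mod 6). -/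
/-!
The squares `(i, i)` attack each other pairwise, so `n ≤ χ(Q(n))`. When `gcd(m, 6) = 1`,
colouring `(i, j)` by `i + 2j mod m` is proper: the four lines through a square change this
colour by multiples of `2`, `1`, `1` and `3` respectively, all units mod `m`. Since `Q(n)` is an
induced subgraph of `Q(m)` for `n ≤ m`, `χ(Q(n))` is at most the least `m ≥ n` coprime to `6`,
which is `n`, `n + 1`, `n + 3` or `n + 2` according as `n ≡ ±1`, `n ≡ 0, 4`, `n ≡ 2` or
`n ≡ 3 (mod 6)`.
-/

open SimpleGraph

lemma Fin.eq_of_natCast_val_eq {m : ℕ} {a b : Fin m} (h : (a.val : ZMod m) = b.val) : a = b := by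
  rw [ZMod.natCast_eq_natCast_iff', Nat.mod_eq_of_lt a.isLt, Nat.mod_eq_of_lt b.isLt] at h
  exact Fin.ext h

lemma Nat.coprime_six_of_mod {n : ℕ} (h : n % 6 = 1 ∨ n % 6 = 5) : Nat.Coprime 6 n := by
  rw [Nat.Coprime, Nat.gcd_rec]
  rcases h with h | h <;> rw [h] <;> rfl

namespace queensGraph

variable {m n : ℕ}

def diagHom (n : ℕ) : (⊤ : SimpleGraph (Fin n)) →g queensGraph n where
  toFun k := (k, k)
  map_rel' {a b} hab := ⟨by simpa using hab, by simp [add_comm]⟩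

def castLEHom (h : n ≤ m) : queensGraph n →g queensGraph m where
  toFun v := (Fin.castLE h v.1, Fin.castLE h v.2)
  map_rel' {u v} := by
    rintro ⟨hne, hadj⟩
    refine ⟨fun he => hne ?_, by simpa [Fin.ext_iff] using hadj⟩
    simpa [Prod.ext_iff, Fin.ext_iff] using he

lemma le_chromaticNumber (n : ℕ) : (n : ℕ∞) ≤ (queensGraph n).chromaticNumber := by
  simpa using chromaticNumber_mono_of_hom (diagHom n)

lemma colorable_of_coprime (hm : Nat.Coprime 6 m) : (queensGraph m).Colorable m := by
  have hm0 : NeZero m := ⟨by rintro rfl; simp at hm⟩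
  have h2 : IsUnit (2 : ZMod m) := by
    exact_mod_cast (ZMod.isUnit_iff_coprime 2 m).2 (hm.coprime_dvd_left (by norm_num))
  have h3 : IsUnit (3 : ZMod m) := by
    exact_mod_cast (ZMod.isUnit_iff_coprime 3 m).2 (hm.coprime_dvd_left (by norm_num))
  let C : (queensGraph m).Coloring (ZMod m) :=
    Coloring.mk (fun v => (v.1.val : ZMod m) + 2 * v.2.val) <| by
      rintro ⟨i, j⟩ ⟨p, q⟩ ⟨hne, hadj⟩ hc
      apply hne
      set x : ZMod m := i.val - p.val with hx
      set y : ZMod m := j.val - q.val with hy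
      have hxy : x + 2 * y = 0 := by simp only at hc; linear_combination hc
      have hy0 : y = 0 := by
        rcases hadj with h | h | h | h
        · subst h
          refine h2.mul_left_cancel (b := y) (c := 0) ?_
          simpa [hx] using hxy
        · subst h
          simp [hy]
        · have h' := congrArg (Nat.cast : ℕ → ZMod m) h
          push_cast at h'
          linear_combination hxy - h'
        · have h' := congrArg (Nat.cast : ℕ → ZMod m) h
          push_cast at h'
          refine h3.mul_left_cancel (b := y) (c := 0) ?_
          linear_combination hxy - h'
      have hx0 : x = 0 := by linear_combination hxy - 2 * hy0
      rw [Fin.eq_of_natCast_val_eq (sub_eq_zero.1 hx0),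
        Fin.eq_of_natCast_val_eq (sub_eq_zero.1 hy0)]
  simpa using C.colorable

lemma chromaticNumber_eq_of_coprime (h : Nat.Coprime 6 n) :
    (queensGraph n).chromaticNumber = n :=
  le_antisymm (colorable_of_coprime h).chromaticNumber_le (le_chromaticNumber n)

lemma exists_chromaticNumber_eq_add {k : ℕ} (h : Nat.Coprime 6 (n + k)) :
    ∃ i ≤ k, (queensGraph n).chromaticNumber = n + i := by
  have hle : (queensGraph n).chromaticNumber ≤ (n + k : ℕ) :=
    ((colorable_of_coprime h).of_hom (castLEHom (Nat.le_add_right n k))).chromaticNumber_le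
  obtain ⟨c, hc⟩ := ENat.ne_top_iff_exists.1 (ne_top_of_le_ne_top (ENat.natCast_ne_top _) hle)
  have hnc : n ≤ c := by exact_mod_cast hc ▸ le_chromaticNumber n
  refine ⟨c - n, ?_, ?_⟩
  · have : c ≤ n + k := by exact_mod_cast hc ▸ hle
    omega
  · rw [← hc, ← Nat.cast_add, Nat.add_sub_cancel' hnc]

end queensGraph

theorem queens_chromatic_cases_general (n : ℕ) :
    ((n % 6 = 1 ∨ n % 6 = 5) → (queensGraph n).chromaticNumber = n) ∧
      ((n % 6 = 0 ∨ n % 6 = 4) →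
        (queensGraph n).chromaticNumber = n ∨ (queensGraph n).chromaticNumber = (n : ℕ∞) + 1) ∧
      (n % 6 = 2 →
        (queensGraph n).chromaticNumber = n ∨ (queensGraph n).chromaticNumber = (n : ℕ∞) + 1 ∨
        (queensGraph n).chromaticNumber = (n : ℕ∞) + 2 ∨
        (queensGraph n).chromaticNumber = (n : ℕ∞) + 3) ∧
      (n % 6 = 3 →
        (queensGraph n).chromaticNumber = n ∨ (queensGraph n).chromaticNumber = (n : ℕ∞) + 1 ∨
        (queensGraph n).chromaticNumber = (n : ℕ∞) + 2) := by
  have bound := fun k (h : (n + k) % 6 = 1 ∨ (n + k) % 6 = 5) =>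
    queensGraph.exists_chromaticNumber_eq_add (Nat.coprime_six_of_mod h)
  refine ⟨fun h => queensGraph.chromaticNumber_eq_of_coprime (Nat.coprime_six_of_mod h),
    fun h => ?_, fun h => ?_, fun h => ?_⟩
  · obtain ⟨i, hi, hχ⟩ := bound 1 (by omega)
    interval_cases i <;> simp [hχ]
  · obtain ⟨i, hi, hχ⟩ := bound 3 (by omega)
    interval_cases i <;> simp [hχ]
  · obtain ⟨i, hi, hχ⟩ := bound 2 (by omega)
    interval_cases i <;> simp [hχ]

/-- the possible values of `χ(Q(n))` for `n ≥ 5`, according to the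
residue of `n` modulo `6`. -/
theorem queens_chromatic_cases (n : ℕ) (hn : 5 ≤ n) :
    ((n % 6 = 1 ∨ n % 6 = 5) → (queensGraph n).chromaticNumber = n) ∧
      ((n % 6 = 0 ∨ n % 6 = 4) →
        (queensGraph n).chromaticNumber = n ∨ (queensGraph n).chromaticNumber = (n : ℕ∞) + 1) ∧
      (n % 6 = 2 →
        (queensGraph n).chromaticNumber = n ∨ (queensGraph n).chromaticNumber = (n : ℕ∞) + 1 ∨
        (queensGraph n).chromaticNumber = (n : ℕ∞) + 2 ∨
        (queensGraph n).chromaticNumber = (n : ℕ∞) + 3) ∧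
      (n % 6 = 3 →
        (queensGraph n).chromaticNumber = n ∨ (queensGraph n).chromaticNumber = (n : ℕ∞) + 1 ∨
        (queensGraph n).chromaticNumber = (n : ℕ∞) + 2) :=
  queens_chromatic_cases_general n
end

section
/- Let G be a finite simple graph, let P = {E_i : i ∈ I} be an edge clique partition of G, for each vertex v let m_v(P) be the number of parts E_i whose associated clique V(G[E_i]) contains v, and let m = m_G(P) = max_v m_v(P). Then every real eigenvalue μ of the adjacency matrix of G satisfies μ ≥ −m. -/
/-- An edge clique partition of `G`, presented as a finite family `P` of cliques
(each with at least two vertices, so that its edge set is nonempty) such that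
every edge of `G` lies inside exactly one clique of `P`. -/
def IsEdgeCliquePartition {V : Type*} (G : SimpleGraph V) (P : Finset (Finset V)) : Prop :=
  (∀ c ∈ P, G.IsClique (c : Set V) ∧ 2 ≤ c.card) ∧
    ∀ e ∈ G.edgeSet, ∃! c, c ∈ P ∧ ∀ v, v ∈ e → v ∈ c

/-- The clique degree of a vertex `v` relative to an edge clique partition `P`:
the number of cliques of `P` containing `v`. -/
def cliqueDeg {V : Type*} [DecidableEq V] (P : Finset (Finset V)) (v : V) : ℕ :=
  (P.filter fun c => v ∈ c).card

/-- The maximum clique degree of `G` relative to `P`. -/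
def maxCliqueDeg {V : Type*} [Fintype V] [DecidableEq V] (P : Finset (Finset V)) : ℕ :=
  Finset.univ.sup fun v => cliqueDeg P v

/-!
With `N` the vertex–clique incidence matrix of `P` and `D` the diagonal matrix of clique degrees,
every edge lies in exactly one clique of `P` and every non-edge in none, so `A + D = N Nᵀ`.
Hence `A + m I = N Nᵀ + (m I - D)` is positive semidefinite, and every eigenvalue of `A` is at
least `-m`.
-/

open Finset Matrix

namespace Matrix.PosSemidef

variable {n R : Type*} [Fintype n] [CommRing R] [LinearOrder R] [IsStrictOrderedRing R]
  [StarRing R] [StarOrderedRing R]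

theorem nonneg_of_mulVec_eq_smul {M : Matrix n n R} (hM : M.PosSemidef) {x : n → R}
    (hx : x ≠ 0) {μ : R} (hμ : M *ᵥ x = μ • x) : 0 ≤ μ := by
  have hquad := hM.dotProduct_mulVec_nonneg x
  rw [hμ, dotProduct_smul, smul_eq_mul] at hquad
  exact nonneg_of_mul_nonneg_left hquad (dotProduct_star_self_pos_iff.mpr hx)

end Matrix.PosSemidef

section

variable {V : Type*} [DecidableEq V]

theorem IsEdgeCliquePartition.card_filter_mem_mem {G : SimpleGraph V} [DecidableRel G.Adj]
    {P : Finset (Finset V)} (hP : IsEdgeCliquePartition G P) {u v : V} (huv : u ≠ v) :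
    #{c ∈ P | u ∈ c ∧ v ∈ c} = if G.Adj u v then 1 else 0 := by
  split_ifs with hadj
  · obtain ⟨c₀, ⟨hc₀P, hc₀⟩, huniq⟩ := hP.2 s(u, v) hadj
    refine card_eq_one.mpr ⟨c₀, eq_singleton_iff_unique_mem.mpr ⟨?_, ?_⟩⟩
    · exact mem_filter.mpr ⟨hc₀P, hc₀ u (by simp), hc₀ v (by simp)⟩
    · rintro c hc
      obtain ⟨hcP, huc, hvc⟩ := mem_filter.mp hc
      exact huniq c ⟨hcP, by simp [huc, hvc]⟩
  · refine card_eq_zero.mpr (filter_eq_empty_iff.mpr ?_)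
    rintro c hcP ⟨huc, hvc⟩
    exact hadj ((hP.1 c hcP).1 huc hvc huv)

def cliqueIncidenceMatrix (R : Type*) [Zero R] [One R] (P : Finset (Finset V)) : Matrix V P R :=
  of fun v c => if v ∈ (c : Finset V) then 1 else 0

theorem cliqueIncidenceMatrix_mul_transpose_apply (R : Type*) [NonAssocSemiring R]
    (P : Finset (Finset V)) (u v : V) :
    (cliqueIncidenceMatrix R P * (cliqueIncidenceMatrix R P)ᵀ) u v = #{c ∈ P | u ∈ c ∧ v ∈ c} := by
  simp only [mul_apply, transpose_apply, cliqueIncidenceMatrix, of_apply, ite_zero_mul_ite_zero,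
    mul_one]
  rw [sum_coe_sort P (fun c => if u ∈ c ∧ v ∈ c then (1 : R) else 0), sum_boole]

theorem IsEdgeCliquePartition.adjMatrix_add_diagonal_cliqueDeg (R : Type*) [NonAssocSemiring R]
    {G : SimpleGraph V} [DecidableRel G.Adj] {P : Finset (Finset V)}
    (hP : IsEdgeCliquePartition G P) :
    G.adjMatrix R + diagonal (fun v => (cliqueDeg P v : R)) =
      cliqueIncidenceMatrix R P * (cliqueIncidenceMatrix R P)ᵀ := by
  ext u v
  rw [cliqueIncidenceMatrix_mul_transpose_apply, Matrix.add_apply, SimpleGraph.adjMatrix_apply]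
  obtain rfl | huv := eq_or_ne u v
  · simp [cliqueDeg]
  · rw [diagonal_apply_ne _ huv, add_zero, hP.card_filter_mem_mem huv]
    split_ifs <;> simp

theorem cliqueDeg_le_maxCliqueDeg [Fintype V] (P : Finset (Finset V)) (v : V) :
    cliqueDeg P v ≤ maxCliqueDeg P :=
  le_sup (mem_univ v)

theorem IsEdgeCliquePartition.posSemidef_adjMatrix_add_maxCliqueDeg [Fintype V]
    (R : Type*) [Ring R] [PartialOrder R] [IsOrderedRing R] [StarRing R] [TrivialStar R]
    [StarOrderedRing R] {G : SimpleGraph V} [DecidableRel G.Adj] {P : Finset (Finset V)}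
    (hP : IsEdgeCliquePartition G P) :
    (G.adjMatrix R + (maxCliqueDeg P : R) • (1 : Matrix V V R)).PosSemidef := by
  have hsplit : G.adjMatrix R + (maxCliqueDeg P : R) • (1 : Matrix V V R) =
      (G.adjMatrix R + diagonal fun v => (cliqueDeg P v : R)) +
        diagonal fun v => (maxCliqueDeg P - cliqueDeg P v : R) := by
    rw [add_assoc, diagonal_add, smul_one_eq_diagonal]
    simp
  rw [hsplit, hP.adjMatrix_add_diagonal_cliqueDeg R]
  refine .add ?_ (.diagonal fun v => ?_)
  · simpa using posSemidef_self_mul_conjTranspose (cliqueIncidenceMatrix R P)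
  · exact sub_nonneg.mpr (Nat.mono_cast (cliqueDeg_le_maxCliqueDeg P v))

end

/-- every real eigenvalue `μ` of the adjacency matrix of `G`
satisfies `μ ≥ -m`, where `m` is the maximum clique degree of `G` relative to an
edge clique partition `P`. -/
theorem eigenvalue_ge_neg_maxCliqueDeg {V : Type*} [Fintype V] [DecidableEq V]
    (G : SimpleGraph V) [DecidableRel G.Adj] (P : Finset (Finset V))
    (hP : IsEdgeCliquePartition G P) (μ : ℝ) (x : V → ℝ) (hx : x ≠ 0)
    (hμ : (G.adjMatrix ℝ).mulVec x = μ • x) :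
    -(maxCliqueDeg P : ℝ) ≤ μ := by
  have hshift : (G.adjMatrix ℝ + (maxCliqueDeg P : ℝ) • (1 : Matrix V V ℝ)) *ᵥ x =
      (μ + maxCliqueDeg P) • x := by
    rw [add_mulVec, smul_mulVec, one_mulVec, hμ, add_smul]
  have hnonneg := (hP.posSemidef_adjMatrix_add_maxCliqueDeg ℝ).nonneg_of_mulVec_eq_smul hx hshift
  linarith
end

section
/- Let G be a finite simple graph and let P be any edge clique partition of G with |P| parts. Then every real eigenvalue μ of the adjacency matrix of G satisfies μ ≥ −|P|. In particular, if μ_min is the least eigenvalue of G, then −μ_min is at most the content C(G) of G, the minimum number of parts of an edge clique partition of G. -/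
/-- The content of `G`: the minimum number of parts of an edge clique partition. -/
noncomputable def content {V : Type*} (G : SimpleGraph V) : ℕ :=
  sInf {k | ∃ P : Finset (Finset V), IsEdgeCliquePartition G P ∧ P.card = k}

section

open Finset Matrix

theorem neg_le_of_posSemidef_add_diagonal {n : Type*} [Fintype n] [DecidableEq n]
    {A : Matrix n n ℝ} {d : n → ℝ} {k μ : ℝ} {x : n → ℝ}
    (hA : (A + diagonal d).PosSemidef) (hd : ∀ i, d i ≤ k) (hx : x ≠ 0)
    (hμ : A *ᵥ x = μ • x) : -k ≤ μ := by
  have hxx : 0 < x ⬝ᵥ x := by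
    simpa using (dotProduct_self_star_pos_iff (v := x)).2 hx
  have hnonneg : 0 ≤ μ * (x ⬝ᵥ x) + x ⬝ᵥ (diagonal d *ᵥ x) := by
    simpa [add_mulVec, hμ] using hA.dotProduct_mulVec_nonneg x
  have hdiag : x ⬝ᵥ (diagonal d *ᵥ x) ≤ k * (x ⬝ᵥ x) := by
    simp only [dotProduct, mulVec_diagonal, mul_sum]
    exact sum_le_sum fun i _ => by nlinarith [hd i, mul_self_nonneg (x i)]
  nlinarith

variable {V : Type*} [DecidableEq V]

def cliqueIncMatrix (P : Finset (Finset V)) : Matrix V P ℝ :=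
  of fun v c => if v ∈ c.1 then 1 else 0

theorem cliqueIncMatrix_mul_transpose_apply (P : Finset (Finset V)) (u v : V) :
    (cliqueIncMatrix P * (cliqueIncMatrix P)ᵀ) u v = #{c ∈ P | u ∈ c ∧ v ∈ c} := by
  simp only [cliqueIncMatrix, mul_apply, transpose_apply, of_apply, ite_zero_mul_ite_zero,
    mul_one, sum_coe_sort P fun c => if u ∈ c ∧ v ∈ c then (1 : ℝ) else 0, sum_boole]

namespace IsEdgeCliquePartition

variable {G : SimpleGraph V} [DecidableRel G.Adj] {P : Finset (Finset V)}

theorem card_filter_mem_mem_of_ne (hP : IsEdgeCliquePartition G P) {u v : V}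
    (huv : u ≠ v) : #{c ∈ P | u ∈ c ∧ v ∈ c} = if G.Adj u v then 1 else 0 := by
  split_ifs with hadj
  · obtain ⟨c₀, ⟨hc₀, hmem⟩, huniq⟩ := hP.2 s(u, v) hadj
    refine card_eq_one.2 ⟨c₀, eq_singleton_iff_unique_mem.2 ⟨?_, ?_⟩⟩
    · exact mem_filter.2 ⟨hc₀, hmem u (Sym2.mem_mk_left u v), hmem v (Sym2.mem_mk_right u v)⟩
    · rintro c hc
      obtain ⟨hcP, hu, hv⟩ := mem_filter.1 hc
      exact huniq c ⟨hcP, fun w hw => by rcases Sym2.mem_iff.1 hw with rfl | rfl <;> assumption⟩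
  · refine card_eq_zero.2 (filter_eq_empty_iff.2 fun c hc ⟨hu, hv⟩ => hadj ?_)
    exact (hP.1 c hc).1 hu hv huv

theorem cliqueIncMatrix_mul_transpose (hP : IsEdgeCliquePartition G P) :
    cliqueIncMatrix P * (cliqueIncMatrix P)ᵀ =
      G.adjMatrix ℝ + diagonal fun v => (cliqueDeg P v : ℝ) := by
  ext u v
  rw [cliqueIncMatrix_mul_transpose_apply, Matrix.add_apply, SimpleGraph.adjMatrix_apply,
    diagonal_apply]
  obtain rfl | huv := eq_or_ne u v
  · simp [cliqueDeg]
  · simp [hP.card_filter_mem_mem_of_ne huv, huv]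

variable [Fintype V]

theorem posSemidef_adjMatrix_add_diagonal_cliqueDeg (hP : IsEdgeCliquePartition G P) :
    (G.adjMatrix ℝ + diagonal fun v => (cliqueDeg P v : ℝ)).PosSemidef := by
  rw [← hP.cliqueIncMatrix_mul_transpose, ← conjTranspose_eq_transpose_of_trivial]
  exact posSemidef_self_mul_conjTranspose _

theorem neg_card_le_of_mulVec_eq_smul (hP : IsEdgeCliquePartition G P) {μ : ℝ} {x : V → ℝ}
    (hx : x ≠ 0) (hμ : G.adjMatrix ℝ *ᵥ x = μ • x) : -(#P : ℝ) ≤ μ :=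
  neg_le_of_posSemidef_add_diagonal hP.posSemidef_adjMatrix_add_diagonal_cliqueDeg
    (fun _ => mod_cast card_filter_le P _) hx hμ

end IsEdgeCliquePartition

namespace SimpleGraph

variable [Fintype V] (G : SimpleGraph V) [DecidableRel G.Adj]

theorem isEdgeCliquePartition_cliqueFinset_two : IsEdgeCliquePartition G (G.cliqueFinset 2) := by
  refine ⟨fun c hc => ?_, fun e he => ?_⟩
  · obtain ⟨hclique, hcard⟩ := mem_cliqueFinset_iff.1 hc
    exact ⟨hclique, hcard.ge⟩
  · induction e with | h u v => ?_
    have hne : u ≠ v := G.ne_of_adj he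
    refine ⟨{u, v}, ⟨mem_cliqueFinset_iff.2 ⟨?_, card_pair hne⟩, fun w hw => ?_⟩, ?_⟩
    · simpa [isClique_pair] using fun _ => he
    · rcases Sym2.mem_iff.1 hw with rfl | rfl <;> simp
    · rintro c ⟨hc, hmem⟩
      have hsub : ({u, v} : Finset V) ⊆ c := by
        simpa [insert_subset_iff] using
          ⟨hmem u (Sym2.mem_mk_left u v), hmem v (Sym2.mem_mk_right u v)⟩
      exact (eq_of_subset_of_card_le hsub (by rw [(mem_cliqueFinset_iff.1 hc).card_eq,
        card_pair hne])).symm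

theorem exists_isEdgeCliquePartition_card_eq_content :
    ∃ P, IsEdgeCliquePartition G P ∧ #P = content G :=
  Nat.sInf_mem (s := {k | ∃ P, IsEdgeCliquePartition G P ∧ #P = k})
    ⟨_, _, G.isEdgeCliquePartition_cliqueFinset_two, rfl⟩

end SimpleGraph

end

/-- every real eigenvalue `μ` of the adjacency matrix of `G`
satisfies `μ ≥ -|P|` for every edge clique partition `P`; in particular
`-μ ≤ C(G)` (applied to the least eigenvalue, this gives `-μ_min ≤ C(G)`). -/
theorem eigenvalue_ge_neg_content {V : Type*} [Fintype V] [DecidableEq V]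
    (G : SimpleGraph V) [DecidableRel G.Adj] (μ : ℝ) (x : V → ℝ) (hx : x ≠ 0)
    (hμ : (G.adjMatrix ℝ).mulVec x = μ • x) :
    (∀ P : Finset (Finset V), IsEdgeCliquePartition G P → -(P.card : ℝ) ≤ μ) ∧
      -μ ≤ (content G : ℝ) := by
  have hbound (P : Finset (Finset V)) (hP : IsEdgeCliquePartition G P) : -(P.card : ℝ) ≤ μ :=
    hP.neg_card_le_of_mulVec_eq_smul hx hμ
  refine ⟨hbound, ?_⟩
  obtain ⟨P, hP, hcard⟩ := G.exists_isEdgeCliquePartition_card_eq_content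
  rw [← hcard]
  linarith [hbound P hP]
end

section
/- For every n ≥ 4, the number −4 is an eigenvalue of the adjacency matrix A of the n-Queens' graph Q(n), and its multiplicity equals (n−3)²; that is, the kernel of A + 4·I (as a linear map on ℝ^{n²}) has dimension exactly (n−3)². -/
/-!
Each square lies on exactly four lines of the board (its row, column, diagonal and
antidiagonal), and two distinct squares share at most one line, which they do iff they are
adjacent. Hence `A + 4I = N Nᵀ` for the square–line incidence matrix `N` (with `6n - 2` lines),
so `ker (A + 4I)` contains `ker Nᵀ` and has dimension `n² - rank (N Nᵀ) = n² - rank N`.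

Lower bound: the `4 × 4` pattern
```
   0  1 -1  0
  -1  0  0  1
   1  0  0 -1
   0 -1  1  0
```
sums to zero along every line, hence so does each of its `(n - 3)²` translates inside the board;
these are linearly independent, since the translate at `(s, t)` is `1` at `(s, t + 1)` and
vanishes there for every translate that is lexicographically larger.

Upper bound: a vector of `ker N` is a relation `r i + c j + p (i + j) + q (i - j) = 0` over the
board, and it is determined by `r 0, r 1, r 2, c 0, c 1, p 0, p 1`. So `dim ker N ≤ 7` and
`rank N ≥ 6n - 9`, i.e. `dim ker (A + 4I) ≤ n² - 6n + 9 = (n - 3)²`.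
-/

namespace Queens

open Matrix Finset Module

theorem linearIndependent_of_triangular {ι κ α K : Type*} [Field K] [Fintype ι] [Preorder α]
    [WellFoundedLT α] (v : ι → κ → K) (p : ι → κ) (key : ι → α) (hdiag : ∀ i, v i (p i) ≠ 0)
    (htri : ∀ i j, j ≠ i → v j (p i) ≠ 0 → key j < key i) : LinearIndependent K v := by
  rw [Fintype.linearIndependent_iff]
  intro g hg i
  induction i using (InvImage.wf key wellFounded_lt).induction with
  | _ i ih =>
    have hsum : ∑ j, g j * v j (p i) = 0 := by simpa using congrFun hg (p i)
    rw [Finset.sum_eq_single i (fun j _ hji => ?_) (by simp)] at hsum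
    · exact (mul_eq_zero.mp hsum).resolve_right (hdiag i)
    · by_cases hv : v j (p i) = 0
      · rw [hv, mul_zero]
      · rw [ih j (htri i j hji hv), zero_mul]

theorem sum_mul_extend_of_injective {α β R : Type*} [Fintype α] [Fintype β] [Semiring R]
    {e : α → β} (he : Function.Injective e) (f : α → R) (w : β → R) :
    ∑ b, w b * Function.extend e f 0 b = ∑ a, w (e a) * f a := by
  refine (Fintype.sum_of_injective e he _ _ (fun b hb => ?_) (fun a => ?_)).symm
  · rw [Function.extend_apply' _ _ _ (by simpa using hb), Pi.zero_apply, mul_zero]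
  · rw [he.extend_apply]

theorem rank_add_finrank_ker_mulVecLin {m l K : Type*} [Fintype l] [Field K] (M : Matrix m l K) :
    M.rank + finrank K (LinearMap.ker M.mulVecLin) = Fintype.card l := by
  rw [rank, LinearMap.finrank_range_add_finrank_ker, finrank_fintype_fun_eq_card]

/-- The lines of direction `d` are the level sets of `lineForm d`: rows, columns, diagonals and
antidiagonals for `d = 0, 1, 2, 3`. -/
def lineForm : Fin 4 → ℤ → ℤ → ℤ :=
  ![fun i _ => i, fun _ j => j, fun i j => i + j, fun i j => i - j]

noncomputable def lineLevels (n : ℕ) : Fin 4 → Finset ℤ :=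
  ![Ico 0 n, Ico 0 n, Ico 0 (2 * n - 1), Ioo (-n) n]

abbrev Line (n : ℕ) := Σ d : Fin 4, lineLevels n d

def incidence (n : ℕ) : Matrix (Fin n × Fin n) (Line n) ℝ :=
  fun u l => if lineForm l.1 (u.1 : ℕ) (u.2 : ℕ) = l.2 then 1 else 0

lemma lineForm_add (d : Fin 4) (a b s t : ℤ) :
    lineForm d (a + s) (b + t) = lineForm d a b + lineForm d s t := by
  fin_cases d <;> simp [lineForm, add_add_add_comm, add_sub_add_comm]

lemma lineForm_mem_lineLevels {n : ℕ} (d : Fin 4) (u : Fin n × Fin n) :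
    lineForm d (u.1 : ℕ) (u.2 : ℕ) ∈ lineLevels n d := by
  fin_cases d <;>
    simp only [lineForm, lineLevels, Fin.reduceFinMk, Fin.isValue, cons_val', cons_val_fin_one,
      Matrix.cons_val, mem_Ico, mem_Ioo] <;> omega

lemma card_line (n : ℕ) : Fintype.card (Line n) = 6 * n - 2 := by
  simp only [Fintype.card_sigma, Fintype.card_coe, Fin.sum_univ_four]
  simp only [lineLevels, Fin.isValue, cons_val_zero, cons_val_one, Matrix.cons_val, Int.card_Ico,
    Int.card_Ioo]
  omega

lemma adjMatrix_add_four_smul_one_apply (n : ℕ) (u v : Fin n × Fin n) :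
    ((queensGraph n).adjMatrix ℝ + (4 : ℝ) • (1 : Matrix (Fin n × Fin n) (Fin n × Fin n) ℝ)) u v =
      ∑ d : Fin 4,
        if lineForm d (u.1 : ℕ) (u.2 : ℕ) = lineForm d (v.1 : ℕ) (v.2 : ℕ) then 1 else 0 := by
  obtain ⟨⟨a, ha⟩, ⟨b, hb⟩⟩ := u
  obtain ⟨⟨c, hc⟩, ⟨d, hd⟩⟩ := v
  rw [Fin.sum_univ_four]
  simp only [lineForm, Matrix.cons_val, Matrix.add_apply, Matrix.smul_apply,
    SimpleGraph.adjMatrix_apply, one_apply, queensGraph, ne_eq, Prod.ext_iff, Fin.ext_iff,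
    sub_eq_sub_iff_add_eq_add]
  norm_cast
  split_ifs <;> first | omega | norm_num

theorem incidence_mul_transpose (n : ℕ) :
    incidence n * (incidence n)ᵀ =
      (queensGraph n).adjMatrix ℝ + (4 : ℝ) • (1 : Matrix (Fin n × Fin n) (Fin n × Fin n) ℝ) := by
  ext u v
  rw [adjMatrix_add_four_smul_one_apply, mul_apply, Fintype.sum_sigma]
  refine Finset.sum_congr rfl fun d _ => ?_
  simp only [incidence, transpose_apply, boole_mul]
  rw [Finset.sum_coe_sort (lineLevels n d) (fun k => if lineForm d (u.1 : ℕ) (u.2 : ℕ) = k then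
    (if lineForm d (v.1 : ℕ) (v.2 : ℕ) = k then (1 : ℝ) else 0) else 0), Finset.sum_ite_eq,
    if_pos (lineForm_mem_lineLevels d u)]
  simp only [eq_comm]

def pattern : Matrix (Fin 4) (Fin 4) ℝ :=
  !![0, 1, -1, 0; -1, 0, 0, 1; 1, 0, 0, -1; 0, -1, 1, 0]

lemma sum_pattern_line (d : Fin 4) (k : ℤ) :
    ∑ p : Fin 4 × Fin 4,
      (if lineForm d (p.1 : ℕ) (p.2 : ℕ) = k then 1 else 0) * pattern p.1 p.2 = 0 := by
  fin_cases d <;>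
    simp only [lineForm, pattern, Fintype.sum_prod_type, Fin.sum_univ_four, Fin.reduceFinMk,
      Fin.isValue, cons_val', cons_val_fin_one, Matrix.cons_val, of_apply, Fin.val_zero,
      Fin.val_one, Fin.val_two] <;>
    norm_num <;> split_ifs <;> norm_num

def boardShift (n : ℕ) (st : Fin (n - 3) × Fin (n - 3)) (p : Fin 4 × Fin 4) : Fin n × Fin n :=
  (⟨p.1 + st.1, by omega⟩, ⟨p.2 + st.2, by omega⟩)

lemma boardShift_injective (n : ℕ) (st : Fin (n - 3) × Fin (n - 3)) :
    Function.Injective (boardShift n st) := by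
  intro p q h
  simp only [boardShift, Prod.ext_iff, Fin.ext_iff, add_left_inj] at h
  exact Prod.ext (Fin.ext h.1) (Fin.ext h.2)

noncomputable def patternAt (n : ℕ) (st : Fin (n - 3) × Fin (n - 3)) : Fin n × Fin n → ℝ :=
  Function.extend (boardShift n st) (fun p => pattern p.1 p.2) 0

lemma patternAt_boardShift (n : ℕ) (st : Fin (n - 3) × Fin (n - 3)) (p : Fin 4 × Fin 4) :
    patternAt n st (boardShift n st p) = pattern p.1 p.2 :=
  (boardShift_injective n st).extend_apply _ _ p

theorem transpose_mulVec_patternAt (n : ℕ) (st : Fin (n - 3) × Fin (n - 3)) :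
    (incidence n)ᵀ *ᵥ patternAt n st = 0 := by
  ext ⟨d, k, hk⟩
  simp only [mulVec, dotProduct, transpose_apply, patternAt, Pi.zero_apply]
  rw [sum_mul_extend_of_injective (boardShift_injective n st)]
  simp only [incidence, boardShift, Nat.cast_add, lineForm_add, ← eq_sub_iff_add_eq]
  exact sum_pattern_line d _

theorem adjMatrix_mulVec_patternAt (n : ℕ) (st : Fin (n - 3) × Fin (n - 3)) :
    (queensGraph n).adjMatrix ℝ *ᵥ patternAt n st = (-4 : ℝ) • patternAt n st := by
  have h := congrArg (incidence n *ᵥ ·) (transpose_mulVec_patternAt n st)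
  simp only [mulVec_mulVec, mulVec_zero, incidence_mul_transpose, add_mulVec, smul_mulVec,
    one_mulVec, add_eq_zero_iff_eq_neg] at h
  rw [h, neg_smul]

lemma lt_of_patternAt_ne_zero {n : ℕ} {i j : Fin (n - 3) × Fin (n - 3)} (hji : j ≠ i)
    (h : patternAt n j (boardShift n i (0, 1)) ≠ 0) : toLex j < toLex i := by
  obtain ⟨q, hq⟩ : ∃ q, boardShift n j q = boardShift n i (0, 1) := by
    by_contra hq
    exact h (Function.extend_apply' _ _ _ hq)
  have hq0 : pattern q.1 q.2 ≠ 0 := by rwa [← hq, patternAt_boardShift] at h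
  have hq00 : q ≠ (0, 0) := by
    rintro rfl
    simp [pattern] at hq0
  simp only [boardShift, Prod.ext_iff, Fin.ext_iff, ne_eq, Fin.val_zero, Fin.val_one] at hq hq00 hji
  rw [Prod.Lex.toLex_lt_toLex, Fin.lt_def, Fin.lt_def, Fin.ext_iff]
  omega

theorem linearIndependent_patternAt (n : ℕ) : LinearIndependent ℝ (patternAt n) :=
  linearIndependent_of_triangular _ (fun i => boardShift n i (0, 1)) toLex
    (fun i => by simp [patternAt_boardShift, pattern]) fun _ _ => lt_of_patternAt_ne_zero

theorem le_finrank_ker_adjMatrix_add_four (n : ℕ) :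
    (n - 3) ^ 2 ≤ finrank ℝ (LinearMap.ker ((queensGraph n).adjMatrix ℝ +
      (4 : ℝ) • (1 : Matrix (Fin n × Fin n) (Fin n × Fin n) ℝ)).mulVecLin) := by
  have hker : ∀ st, patternAt n st ∈ LinearMap.ker ((queensGraph n).adjMatrix ℝ +
      (4 : ℝ) • (1 : Matrix (Fin n × Fin n) (Fin n × Fin n) ℝ)).mulVecLin := fun st => by
    rw [LinearMap.mem_ker, mulVecLin_apply, ← incidence_mul_transpose, ← mulVec_mulVec,
      transpose_mulVec_patternAt, mulVec_zero]
  calc (n - 3) ^ 2 = finrank ℝ (Submodule.span ℝ (Set.range (patternAt n))) := by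
        rw [finrank_span_eq_card (linearIndependent_patternAt n)]
        simp [sq]
    _ ≤ _ := Submodule.finrank_mono (Submodule.span_le.mpr (Set.range_subset_iff.mpr hker))

def LineRelationZeroUpTo (r c p q : ℤ → ℝ) (j : ℤ) : Prop :=
  (∀ i, 0 ≤ i → i ≤ j → r i = 0 ∧ c i = 0) ∧ p (j + 1) = 0 ∧ ∀ k, |k| ≤ j → q k = 0

lemma lineRelationZeroUpTo_one {n : ℕ} (hn : 2 ≤ n) {r c p q : ℤ → ℝ}
    (h : ∀ i j : ℤ, 0 ≤ i → i < n → 0 ≤ j → j < n → r i + c j + p (i + j) + q (i - j) = 0)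
    (hr0 : r 0 = 0) (hr1 : r 1 = 0) (hc0 : c 0 = 0) (hc1 : c 1 = 0) (hp0 : p 0 = 0)
    (hp1 : p 1 = 0) : LineRelationZeroUpTo r c p q 1 := by
  have h00 := h 0 0 le_rfl (by omega) le_rfl (by omega)
  have h01 := h 0 1 le_rfl (by omega) zero_le_one (by omega)
  have h10 := h 1 0 zero_le_one (by omega) le_rfl (by omega)
  have h11 := h 1 1 zero_le_one (by omega) zero_le_one (by omega)
  norm_num at h00 h01 h10 h11
  refine ⟨fun i hi0 hi1 => ?_, by norm_num; linarith, fun k hk => ?_⟩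
  · obtain rfl | rfl : i = 0 ∨ i = 1 := by omega
    exacts [⟨hr0, hc0⟩, ⟨hr1, hc1⟩]
  · obtain rfl | rfl | rfl : k = -1 ∨ k = 0 ∨ k = 1 := by rw [abs_le] at hk; omega
    all_goals linarith

lemma LineRelationZeroUpTo.add_one {n : ℕ} {r c p q : ℤ → ℝ}
    (h : ∀ i j : ℤ, 0 ≤ i → i < n → 0 ≤ j → j < n → r i + c j + p (i + j) + q (i - j) = 0)
    (hr2 : r 2 = 0) {j : ℤ} (hj : 1 ≤ j) (hjn : j + 1 < n)
    (hzero : LineRelationZeroUpTo r c p q j) : LineRelationZeroUpTo r c p q (j + 1) := by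
  obtain ⟨hrc, hp, hq⟩ := hzero
  obtain ⟨hr0, hc0⟩ := hrc 0 le_rfl (by omega)
  obtain ⟨hr1, hc1⟩ := hrc 1 zero_le_one hj
  have hpj : p (j + 1 + 1) = 0 := by
    have := h 2 j (by norm_num) (by omega) (by omega) (by omega)
    rw [show 2 + j = j + 1 + 1 by ring] at this
    linarith [(hrc j (by omega) le_rfl).2, hq (2 - j) (by rw [abs_le]; omega)]
  have hcj : c (j + 1) = 0 := by
    have := h 1 (j + 1) (by norm_num) (by omega) (by omega) hjn
    rw [show 1 + (j + 1) = j + 1 + 1 by ring, show 1 - (j + 1) = -j by ring] at this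
    linarith [hq (-j) (by rw [abs_le]; omega)]
  have hrj : r (j + 1) = 0 := by
    have := h (j + 1) 1 (by omega) hjn (by norm_num) (by omega)
    rw [add_sub_cancel_right] at this
    linarith [hq j (by rw [abs_le]; omega)]
  refine ⟨fun i hi0 hi1 => ?_, hpj, fun k hk => ?_⟩
  · rcases (show i ≤ j ∨ i = j + 1 by omega) with hi | rfl
    exacts [hrc i hi0 hi, ⟨hrj, hcj⟩]
  · rcases (show |k| ≤ j ∨ k = j + 1 ∨ k = -(j + 1) by rw [abs_le] at hk ⊢; omega)
      with hk | rfl | rfl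
    · exact hq k hk
    · have := h (j + 1) 0 (by omega) hjn le_rfl (by omega)
      rw [add_zero, sub_zero] at this
      linarith
    · have := h 0 (j + 1) le_rfl (by omega) (by omega) hjn
      rw [zero_add, zero_sub] at this
      linarith

theorem eq_zero_of_line_relation {n : ℕ} (hn : 2 ≤ n) {r c p q : ℤ → ℝ}
    (h : ∀ i j : ℤ, 0 ≤ i → i < n → 0 ≤ j → j < n → r i + c j + p (i + j) + q (i - j) = 0)
    (hr0 : r 0 = 0) (hr1 : r 1 = 0) (hr2 : r 2 = 0) (hc0 : c 0 = 0) (hc1 : c 1 = 0)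
    (hp0 : p 0 = 0) (hp1 : p 1 = 0) :
    (∀ k ∈ Ico (0 : ℤ) n, r k = 0 ∧ c k = 0) ∧ (∀ k ∈ Ico (0 : ℤ) (2 * n - 1), p k = 0) ∧
      ∀ k ∈ Ioo (-(n : ℤ)) n, q k = 0 := by
  have hzero : ∀ j : ℤ, 1 ≤ j → j < n → LineRelationZeroUpTo r c p q j := by
    intro j hj
    induction j, hj using Int.leInduction with
    | base => exact fun _ => lineRelationZeroUpTo_one hn h hr0 hr1 hc0 hc1 hp0 hp1
    | succ j hj ih => exact fun hjn => (ih (by omega)).add_one h hr2 hj hjn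
  obtain ⟨hrc, -, hq⟩ := hzero (n - 1) (by omega) (by omega)
  refine ⟨fun k hk => ?_, fun k hk => ?_, fun k hk => ?_⟩
  · rw [mem_Ico] at hk
    exact hrc k hk.1 (by omega)
  · rw [mem_Ico] at hk
    -- the square `(i, k - i)` with `i = min k (n - 1)` lies on the diagonal `k`
    have := h (min k (n - 1)) (k - min k (n - 1)) (by omega) (by omega) (by omega) (by omega)
    rw [add_sub_cancel] at this
    linarith [hrc (min k (n - 1)) (by omega) (by omega),
      hrc (k - min k (n - 1)) (by omega) (by omega),
      hq (min k (n - 1) - (k - min k (n - 1))) (by rw [abs_le]; omega)]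
  · rw [mem_Ioo] at hk
    exact hq k (by rw [abs_le]; omega)

noncomputable def lineValues {n : ℕ} (x : Line n → ℝ) (d : Fin 4) : ℤ → ℝ :=
  Function.extend Subtype.val (fun k : lineLevels n d => x ⟨d, k⟩) 0

lemma lineValues_of_mem {n : ℕ} (x : Line n → ℝ) {d : Fin 4} {k : ℤ} (hk : k ∈ lineLevels n d) :
    lineValues x d k = x ⟨d, k, hk⟩ :=
  Subtype.val_injective.extend_apply _ _ (⟨k, hk⟩ : lineLevels n d)

lemma incidence_mulVec_apply {n : ℕ} (x : Line n → ℝ) (u : Fin n × Fin n) :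
    (incidence n *ᵥ x) u = ∑ d, lineValues x d (lineForm d (u.1 : ℕ) (u.2 : ℕ)) := by
  simp only [mulVec, dotProduct, Fintype.sum_sigma, incidence]
  refine Finset.sum_congr rfl fun d _ => ?_
  rw [lineValues_of_mem x (lineForm_mem_lineLevels d u),
    Fintype.sum_eq_single ⟨_, lineForm_mem_lineLevels d u⟩ (fun k hk => ?_)]
  · simp
  · rw [if_neg (fun h => hk (Subtype.ext h.symm)), zero_mul]

theorem eq_zero_of_incidence_mulVec_eq_zero {n : ℕ} (hn : 2 ≤ n) {x : Line n → ℝ}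
    (hx : incidence n *ᵥ x = 0) (hr0 : lineValues x 0 0 = 0) (hr1 : lineValues x 0 1 = 0)
    (hr2 : lineValues x 0 2 = 0) (hc0 : lineValues x 1 0 = 0) (hc1 : lineValues x 1 1 = 0)
    (hp0 : lineValues x 2 0 = 0) (hp1 : lineValues x 2 1 = 0) : x = 0 := by
  have hrel : ∀ i j : ℤ, 0 ≤ i → i < n → 0 ≤ j → j < n → lineValues x 0 i + lineValues x 1 j +
      lineValues x 2 (i + j) + lineValues x 3 (i - j) = 0 := by
    intro i j hi0 hin hj0 hjn
    lift i to ℕ using hi0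
    lift j to ℕ using hj0
    have := congrFun hx (⟨i, by omega⟩, ⟨j, by omega⟩)
    simpa [incidence_mulVec_apply, Fin.sum_univ_four, lineForm] using this
  obtain ⟨hrc, hp, hq⟩ := eq_zero_of_line_relation hn hrel hr0 hr1 hr2 hc0 hc1 hp0 hp1
  ext ⟨d, k, hk⟩
  rw [Pi.zero_apply, ← lineValues_of_mem x hk]
  fin_cases d
  exacts [(hrc k hk).1, (hrc k hk).2, hp k hk, hq k hk]

theorem finrank_ker_incidence_le {n : ℕ} (hn : 3 ≤ n) :
    finrank ℝ (LinearMap.ker (incidence n).mulVecLin) ≤ 7 := by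
  let lines : Fin 7 → Line n :=
    ![⟨0, 0, by simp [lineLevels]; omega⟩, ⟨0, 1, by simp [lineLevels]; omega⟩,
      ⟨0, 2, by simp [lineLevels]; omega⟩, ⟨1, 0, by simp [lineLevels]; omega⟩,
      ⟨1, 1, by simp [lineLevels]; omega⟩, ⟨2, 0, by simp [lineLevels]; omega⟩,
      ⟨2, 1, by simp [lineLevels]; omega⟩]
  have hinj : Function.Injective
      ((LinearMap.funLeft ℝ ℝ lines).domRestrict (LinearMap.ker (incidence n).mulVecLin)) := by
    rw [← LinearMap.ker_eq_bot, LinearMap.ker_eq_bot']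
    rintro ⟨x, hx⟩ h
    have hl : ∀ i, x (lines i) = 0 := fun i => congrFun h i
    refine Subtype.ext (eq_zero_of_incidence_mulVec_eq_zero (by omega) hx ?_ ?_ ?_ ?_ ?_ ?_ ?_)
    all_goals rw [lineValues_of_mem]
    exacts [hl 0, hl 1, hl 2, hl 3, hl 4, hl 5, hl 6]
  simpa using LinearMap.finrank_le_finrank_of_injective hinj

theorem finrank_ker_adjMatrix_add_four_le {n : ℕ} (hn : 3 ≤ n) :
    finrank ℝ (LinearMap.ker ((queensGraph n).adjMatrix ℝ +
      (4 : ℝ) • (1 : Matrix (Fin n × Fin n) (Fin n × Fin n) ℝ)).mulVecLin) ≤ (n - 3) ^ 2 := by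
  have hA := rank_add_finrank_ker_mulVecLin ((queensGraph n).adjMatrix ℝ +
    (4 : ℝ) • (1 : Matrix (Fin n × Fin n) (Fin n × Fin n) ℝ))
  have hB := rank_add_finrank_ker_mulVecLin (incidence n)
  nth_rw 1 [← incidence_mul_transpose] at hA
  rw [rank_self_mul_transpose, Fintype.card_prod, Fintype.card_fin] at hA
  rw [card_line] at hB
  have hsq : (n - 3) ^ 2 + 6 * n = n * n + 9 := by
    obtain ⟨m, rfl⟩ : ∃ m, n = m + 3 := ⟨n - 3, by omega⟩
    rw [Nat.add_sub_cancel]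
    ring
  have := finrank_ker_incidence_le hn
  generalize n * n = N at hA hsq
  omega

end Queens

/-- for `n ≥ 4`, `-4` is an eigenvalue of the adjacency matrix `A`
of `Q(n)` with multiplicity exactly `(n-3)²`, i.e. `ker (A + 4I)` has dimension
`(n-3)²`. -/
theorem queens_neg_four_multiplicity (n : ℕ) (hn : 4 ≤ n) :
    (∃ x : Fin n × Fin n → ℝ, x ≠ 0 ∧
        ((queensGraph n).adjMatrix ℝ).mulVec x = (-4 : ℝ) • x) ∧
      Module.finrank ℝ
        (LinearMap.ker
          (((queensGraph n).adjMatrix ℝ + (4 : ℝ) • (1 : Matrix (Fin n × Fin n) (Fin n × Fin n) ℝ)).mulVecLin)) =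
        (n - 3) ^ 2 := by
  refine ⟨?_, le_antisymm (Queens.finrank_ker_adjMatrix_add_four_le (by omega))
    (Queens.le_finrank_ker_adjMatrix_add_four n)⟩
  let st : Fin (n - 3) × Fin (n - 3) := (⟨0, by omega⟩, ⟨0, by omega⟩)
  exact ⟨Queens.patternAt n st, (Queens.linearIndependent_patternAt n).ne_zero st,
    Queens.adjMatrix_mulVec_patternAt n st⟩
end
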